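/- arXiv:1907.08323 — 10 statements merged into one kernel-verified Lean document; each statement's English description precedes it below -/
import Mathlib

section
/- There exists an F_σ set C ⊆ ω^ω × ω^ω such that for every countable subset A ⊆ ω^ω there exists y ∈ ω^ω with C_y = A, and every vertical section C_y is countable (here C_y = {x : (x,y) ∈ C}). -/
/-- A set is F_σ if it is a countable union of closed sets. -/
def IsFsigma {X : Type*} [TopologicalSpace X] (s : Set X) : Prop :=
  ∃ F : ℕ → Set X, (∀ n, IsClosed (F n)) ∧ s = ⋃ n, F n

/-- There is an F_σ set `C ⊆ ω^ω × ω^ω` all of whose vertical sections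
`C_y = {x | (x,y) ∈ C}` are countable, and such that every countable subset of
`ω^ω` is a section of `C`. -/
theorem exists_Fsigma_universal_countable :
    ∃ C : Set ((ℕ → ℕ) × (ℕ → ℕ)), IsFsigma C ∧
      (∀ y : ℕ → ℕ, {x : ℕ → ℕ | (x, y) ∈ C}.Countable) ∧
      ∀ A : Set (ℕ → ℕ), A.Countable → ∃ y : ℕ → ℕ, {x : ℕ → ℕ | (x, y) ∈ C} = A := by
  classical
  set F : ℕ → Set ((ℕ → ℕ) × (ℕ → ℕ)) := fun n =>
    {p | p.2 0 = 0 ∧ ∀ m, p.1 m = p.2 (Nat.pair n m + 1)} with hF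
  refine ⟨⋃ n, F n, ⟨F, fun n => ?_, rfl⟩, ?_, ?_⟩
  · -- closedness
    have : F n = {p : (ℕ → ℕ) × (ℕ → ℕ) | p.2 0 = 0} ∩
        ⋂ m, {p : (ℕ → ℕ) × (ℕ → ℕ) | p.1 m = p.2 (Nat.pair n m + 1)} := by
      ext p; simp [hF, Set.mem_iInter]
    rw [this]
    refine IsClosed.inter ?_ (isClosed_iInter fun m => ?_)
    · exact isClosed_eq ((continuous_apply 0).comp continuous_snd) continuous_const
    · exact isClosed_eq ((continuous_apply m).comp continuous_fst)
        ((continuous_apply (Nat.pair n m + 1)).comp continuous_snd)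
  · -- sections countable
    intro y
    have hsub : {x : ℕ → ℕ | (x, y) ∈ ⋃ n, F n} ⊆
        Set.range (fun n : ℕ => fun m => y (Nat.pair n m + 1)) := by
      intro x hx
      simp only [Set.mem_iUnion] at hx
      obtain ⟨n, _, h2⟩ := hx
      exact ⟨n, by funext m; exact (h2 m).symm⟩
    exact Set.Countable.mono hsub (Set.countable_range _)
  · -- universality
    intro A hA
    rcases A.eq_empty_or_nonempty with rfl | hne
    · refine ⟨fun _ => 1, ?_⟩
      ext x
      simp only [Set.mem_setOf_eq, Set.mem_iUnion, Set.mem_empty_iff_false, iff_false]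
      rintro ⟨n, h1, _⟩
      exact one_ne_zero h1
    · obtain ⟨f, hf⟩ := Set.Countable.exists_eq_range hA hne
      refine ⟨fun k => if k = 0 then 0 else f (Nat.unpair (k - 1)).1 (Nat.unpair (k - 1)).2, ?_⟩
      ext x
      simp only [Set.mem_setOf_eq, Set.mem_iUnion, hF, hf, Set.mem_range]
      constructor
      · rintro ⟨n, _, h2⟩
        refine ⟨n, ?_⟩
        funext m
        have := h2 m
        simpa [Nat.unpair_pair] using this.symm
      · rintro ⟨n, rfl⟩
        exact ⟨n, rfl, fun m => by simp [Nat.unpair_pair]⟩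
end

section
/- There exists a G_δ set G ⊆ ω^ω × X such that every vertical section G_x is a comeager G_δ subset of X, and for every comeager G_δ set H ⊆ X there is x ∈ ω^ω with G_x = H; consequently, the complement of G is an F_σ universal set for the σ-ideal of meager subsets of X (i.e., its sections are meager and form a base of the meager ideal). -/
open Set Filter TopologicalSpace

section

variable {X : Type*} [TopologicalSpace X]

theorem IsGδ.isFsigma_compl {s : Set X} (hs : IsGδ s) : IsFsigma sᶜ := by
  obtain ⟨T, hT, rfl⟩ := hs.eq_iInter_nat
  exact ⟨fun n => (T n)ᶜ, fun n => (hT n).isClosed_compl, compl_iInter T⟩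

theorem isOpen_setOf_apply_mem {ι κ : Type*} [TopologicalSpace κ] [DiscreteTopology κ] (i : ι)
    {g : κ → Set X} (hg : ∀ v, IsOpen (g v)) :
    IsOpen {p : (ι → κ) × X | p.2 ∈ g (p.1 i)} := by
  have hunion : {p : (ι → κ) × X | p.2 ∈ g (p.1 i)} =
      ⋃ v, ((fun x : ι → κ => x i) ⁻¹' {v}) ×ˢ g v := by
    ext p
    simp [eq_comm]
  rw [hunion]
  exact isOpen_iUnion fun v =>
    ((continuous_apply i).isOpen_preimage _ (isOpen_discrete _)).prod (hg v)

end

namespace CodedDenseOpen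

variable {X : Type*} (e : ℕ → Set X)

open Classical in
def subBasic (k v : ℕ) : Set X :=
  if (e v).Nonempty ∧ e v ⊆ e k then e v else e k

def codedSet (x : ℕ → ℕ) : Set X :=
  ⋃ k, subBasic e k (x k)

variable {e}

theorem subBasic_subset (k v : ℕ) : subBasic e k v ⊆ e k := by
  unfold subBasic
  split_ifs with h
  exacts [h.2, subset_rfl]

theorem subBasic_nonempty {k : ℕ} (hk : (e k).Nonempty) (v : ℕ) : (subBasic e k v).Nonempty := by
  unfold subBasic
  split_ifs with h
  exacts [h.1, hk]

theorem subBasic_self (k : ℕ) : subBasic e k k = e k := by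
  unfold subBasic
  split_ifs <;> rfl

variable [TopologicalSpace X]

theorem isOpen_subBasic (he : ∀ n, IsOpen (e n)) (k v : ℕ) : IsOpen (subBasic e k v) := by
  unfold subBasic
  split_ifs
  exacts [he v, he k]

theorem isOpen_setOf_mem_codedSet (he : ∀ n, IsOpen (e n)) :
    IsOpen {p : (ℕ → ℕ) × X | p.2 ∈ codedSet e p.1} := by
  simp only [codedSet, mem_iUnion, ofPred_exists]
  exact isOpen_iUnion fun k => isOpen_setOf_apply_mem k (isOpen_subBasic he k)

theorem dense_codedSet (hb : IsTopologicalBasis (range e)) (x : ℕ → ℕ) :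
    Dense (codedSet e x) := by
  rw [hb.dense_iff]
  rintro _ ⟨k, rfl⟩ hk
  obtain ⟨y, hy⟩ := subBasic_nonempty hk (x k)
  exact ⟨y, subBasic_subset k _ hy, mem_iUnion_of_mem k hy⟩

theorem exists_subBasic_subset (hb : IsTopologicalBasis (range e)) {W : Set X} (hWo : IsOpen W)
    (hWd : Dense W) (k : ℕ) : ∃ v, subBasic e k v ⊆ W ∧ (e k ⊆ W → e k ⊆ subBasic e k v) := by
  by_cases hkW : e k ⊆ W
  · exact ⟨k, (subBasic_self k).trans_subset hkW, fun _ => (subBasic_self k).symm.subset⟩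
  have hk : (e k).Nonempty := nonempty_iff_ne_empty.2 fun h => hkW (h ▸ empty_subset W)
  obtain ⟨z, hz⟩ := hWd.inter_open_nonempty (e k) (hb.isOpen (mem_range_self k)) hk
  obtain ⟨_, ⟨v, rfl⟩, hzv, hvkW⟩ :=
    hb.exists_subset_of_mem_open hz ((hb.isOpen (mem_range_self k)).inter hWo)
  have hv : subBasic e k v = e v :=
    if_pos ⟨⟨z, hzv⟩, hvkW.trans inter_subset_left⟩
  exact ⟨v, hv ▸ hvkW.trans inter_subset_right, fun h => absurd h hkW⟩

theorem exists_codedSet_eq (hb : IsTopologicalBasis (range e)) {W : Set X} (hWo : IsOpen W)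
    (hWd : Dense W) : ∃ x, codedSet e x = W := by
  choose x hxW hkx using exists_subBasic_subset hb hWo hWd
  refine ⟨x, (iUnion_subset hxW).antisymm fun y hy => ?_⟩
  obtain ⟨_, ⟨k, rfl⟩, hyk, hkW⟩ := hb.exists_subset_of_mem_open hy hWo
  exact mem_iUnion_of_mem k (hkx k hkW hyk)

end CodedDenseOpen

section

variable (X : Type*) [TopologicalSpace X]

open CodedDenseOpen in
theorem exists_universal_denseOpen [SecondCountableTopology X] :
    ∃ D : (ℕ → ℕ) → Set X, IsOpen {p : (ℕ → ℕ) × X | p.2 ∈ D p.1} ∧ (∀ x, Dense (D x)) ∧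
      ∀ W, IsOpen W → Dense W → ∃ x, D x = W := by
  obtain ⟨e, hb⟩ := exists_seq_basis X
  exact ⟨codedSet e, isOpen_setOf_mem_codedSet fun n => hb.isOpen (mem_range_self n),
    dense_codedSet hb, fun _ => exists_codedSet_eq hb⟩

variable {X} [BaireSpace X]

theorem exists_isGδ_universal_residual {D : (ℕ → ℕ) → Set X}
    (hDo : IsOpen {p : (ℕ → ℕ) × X | p.2 ∈ D p.1}) (hDd : ∀ x, Dense (D x))
    (hDu : ∀ W, IsOpen W → Dense W → ∃ x, D x = W) :
    ∃ G : Set ((ℕ → ℕ) × X), IsGδ G ∧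
      (∀ x : ℕ → ℕ, IsGδ {y : X | (x, y) ∈ G} ∧ {y : X | (x, y) ∈ G} ∈ residual X) ∧
      ∀ H : Set X, IsGδ H → H ∈ residual X → ∃ x : ℕ → ℕ, {y : X | (x, y) ∈ G} = H := by
  let G : Set ((ℕ → ℕ) × X) := {p | ∀ n, p.2 ∈ D fun j => p.1 (Nat.pair n j)}
  have hsec : ∀ x, {y | (x, y) ∈ G} = ⋂ n, D fun j => x (Nat.pair n j) := fun x => by
    ext y
    simp [G]
  have hDxo : ∀ x, IsOpen (D x) := fun x => hDo.preimage (Continuous.prodMk_right x)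
  refine ⟨G, ?_, fun x => ?_, fun H hHG hHr => ?_⟩
  · have hG : G = ⋂ n, (fun p : (ℕ → ℕ) × X => ((fun j => p.1 (Nat.pair n j)), p.2)) ⁻¹'
        {p | p.2 ∈ D p.1} := by
      ext p
      simp [G]
    rw [hG]
    exact .iInter_of_isOpen fun n => hDo.preimage (by fun_prop)
  · rw [hsec]
    exact ⟨.iInter_of_isOpen fun n => hDxo _,
      countable_iInter_mem.2 fun n => residual_of_dense_open (hDxo _) (hDd _)⟩
  · obtain ⟨W, hWo, rfl⟩ := hHG.eq_iInter_nat
    have hWd : ∀ n, Dense (W n) := fun n =>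
      dense_of_mem_residual (mem_of_superset hHr (iInter_subset W n))
    choose c hc using fun n => hDu (W n) (hWo n) (hWd n)
    refine ⟨fun m => c m.unpair.1 m.unpair.2, ?_⟩
    simp only [hsec, Nat.unpair_pair, hc]

theorem exists_subset_compl_section_of_isMeagre {Y : Type*} {G : Set (Y × X)}
    (hGu : ∀ H : Set X, IsGδ H → H ∈ residual X → ∃ x : Y, {y : X | (x, y) ∈ G} = H)
    {A : Set X} (hA : IsMeagre A) : ∃ x : Y, A ⊆ {y : X | (x, y) ∈ Gᶜ} := by
  obtain ⟨H, hHA, hHG, hHd⟩ := mem_residual.1 hA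
  obtain ⟨x, hx⟩ := hGu H hHG (residual_of_dense_Gδ hHG hHd)
  exact ⟨x, fun y hyA hyG => hHA (hx ▸ hyG) hyA⟩

end

theorem exists_Gdelta_universal_comeager_general
    (X : Type*) [TopologicalSpace X] [PolishSpace X] :
    ∃ G : Set ((ℕ → ℕ) × X), IsGδ G ∧
      (∀ x : ℕ → ℕ, IsGδ {y : X | (x, y) ∈ G} ∧ {y : X | (x, y) ∈ G} ∈ residual X) ∧
      (∀ H : Set X, IsGδ H → H ∈ residual X → ∃ x : ℕ → ℕ, {y : X | (x, y) ∈ G} = H) ∧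
      IsFsigma Gᶜ ∧
      (∀ x : ℕ → ℕ, IsMeagre {y : X | (x, y) ∈ Gᶜ}) ∧
      ∀ A : Set X, IsMeagre A → ∃ x : ℕ → ℕ, A ⊆ {y : X | (x, y) ∈ Gᶜ} := by
  obtain ⟨D, hDo, hDd, hDu⟩ := exists_universal_denseOpen X
  obtain ⟨G, hG, hsec, hGu⟩ := exists_isGδ_universal_residual hDo hDd hDu
  refine ⟨G, hG, hsec, hGu, hG.isFsigma_compl, fun x => ?_,
    fun A => exists_subset_compl_section_of_isMeagre hGu⟩
  simpa only [IsMeagre, mem_compl_iff, compl_ofPred, not_not] using (hsec x).2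

/-- For an uncountable Polish space `X`, there is a G_δ set `G ⊆ ω^ω × X` whose
vertical sections are exactly (cofinally) the comeager G_δ subsets of `X`; its
complement is an F_σ universal set for the σ-ideal of meager subsets of `X`:
all its sections are meager and every meager set is contained in some section. -/
theorem exists_Gdelta_universal_comeager
    (X : Type*) [TopologicalSpace X] [PolishSpace X] [Uncountable X] :
    ∃ G : Set ((ℕ → ℕ) × X), IsGδ G ∧
      (∀ x : ℕ → ℕ, IsGδ {y : X | (x, y) ∈ G} ∧ {y : X | (x, y) ∈ G} ∈ residual X) ∧
      (∀ H : Set X, IsGδ H → H ∈ residual X → ∃ x : ℕ → ℕ, {y : X | (x, y) ∈ G} = H) ∧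
      IsFsigma Gᶜ ∧
      (∀ x : ℕ → ℕ, IsMeagre {y : X | (x, y) ∈ Gᶜ}) ∧
      ∀ A : Set X, IsMeagre A → ∃ x : ℕ → ℕ, A ⊆ {y : X | (x, y) ∈ Gᶜ} :=
  exists_Gdelta_universal_comeager_general X
end

section
/- There exists a G_δ set G ⊆ ω^ω × 2^ω such that every vertical section G_f is a null G_δ subset of 2^ω (with respect to the Haar/coin-flipping measure), and for every null set X ⊆ 2^ω there exists f ∈ ω^ω with X ⊆ G_f. That is, G is a G_δ universal set for the null ideal on Cantor space. -/
/-!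
A code `f : ℕ → ℕ` lists, for each `n`, basic open sets `B (f (Nat.pair n k))`, keeping the `k`-th
one only while the first `k + 1` of them cover a set of measure at most `1 / n`; the section at `f`
is the intersection over `n` of the unions of the kept sets. Whether a set is kept depends on
finitely many values of the code, so the universal set is G_δ, and each section is null because an
increasing union of sets of measure `≤ 1 / n` has measure `≤ 1 / n`. Conversely, a finite Borel
measure on a metrizable space is outer regular, so a null set lies in open sets of arbitrarily
small measure, each a union of a sequence of basic open sets that a code can list.
-/

open Set MeasureTheory TopologicalSpace
open scoped ENNReal

theorem Set.Finite.isOpen_setOf_of_dependsOn {ι : Type*} {α : ι → Type*}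
    [∀ i, TopologicalSpace (α i)] [∀ i, DiscreteTopology (α i)] {P : (∀ i, α i) → Prop} {s : Set ι}
    (hs : s.Finite) (hP : DependsOn P s) : IsOpen {x | P x} := by
  refine isOpen_iff_forall_mem_open.2 fun x hx => ⟨s.pi fun i => {x i}, ?_, ?_, ?_⟩
  · intro y hy
    exact (hP fun i hi => (hy i hi).symm).mp hx
  · exact isOpen_set_pi hs fun i _ => isOpen_discrete _
  · exact fun i _ => rfl

theorem TopologicalSpace.exists_seq_isOpen_forall_eq_iUnion (X : Type*) [TopologicalSpace X]
    [SecondCountableTopology X] :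
    ∃ B : ℕ → Set X, (∀ i, IsOpen (B i)) ∧ ∀ U, IsOpen U → ∃ c : ℕ → ℕ, U = ⋃ k, B (c k) := by
  obtain ⟨B, hB⟩ := ((countable_countableBasis X).insert ∅).exists_eq_range (insert_nonempty _ _)
  have hB_open (i : ℕ) : IsOpen (B i) := by
    rcases (hB ▸ mem_range_self i : B i ∈ insert ∅ (countableBasis X)) with h | h
    · exact h ▸ isOpen_empty
    · exact isOpen_of_mem_countableBasis h
  refine ⟨B, hB_open, fun U hU => ?_⟩
  obtain ⟨i₀, hi₀⟩ : ∅ ∈ range B := hB ▸ mem_insert _ _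
  have hi₀U : B i₀ ⊆ U := hi₀ ▸ empty_subset U
  obtain ⟨c, hc⟩ := (to_countable {i | B i ⊆ U}).exists_eq_range ⟨i₀, hi₀U⟩
  refine ⟨c, (iUnion_subset fun k => ?_).antisymm' fun y hy => ?_⟩
  · exact (hc ▸ mem_range_self k : c k ∈ {i | B i ⊆ U})
  · obtain ⟨s, hs, hys, hsU⟩ := (isBasis_countableBasis X).exists_subset_of_mem_open hy hU
    obtain ⟨i, rfl⟩ : s ∈ range B := hB ▸ mem_insert_of_mem _ hs
    obtain ⟨k, hk⟩ : i ∈ range c := hc ▸ hsU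
    exact mem_iUnion.2 ⟨k, hk ▸ hys⟩

namespace MeasureTheory

variable {X : Type*}

def rowUnion (B : ℕ → Set X) (f : ℕ → ℕ) (n k : ℕ) : Set X := ⋃ j ≤ k, B (f (Nat.pair n j))

theorem monotone_rowUnion (B : ℕ → Set X) (f : ℕ → ℕ) (n : ℕ) : Monotone (rowUnion B f n) :=
  fun _ _ hkl => biUnion_mono (fun _ hj => le_trans hj hkl) fun _ _ => le_rfl

theorem dependsOn_rowUnion (B : ℕ → Set X) (n k : ℕ) :
    DependsOn (fun f => rowUnion B f n k) (Nat.pair n '' Iic k) := fun f g hfg => by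
  refine iUnion₂_congr fun j hj => ?_
  rw [hfg _ (mem_image_of_mem _ hj)]

variable [MeasurableSpace X] {μ : Measure X}

theorem measure_biUnion_setOf_measure_le {ι : Type*} [LinearOrder ι] [Countable ι]
    {Q : ι → Set X} (hQ : Monotone Q) (ε : ℝ≥0∞) : μ (⋃ k ∈ {k | μ (Q k) ≤ ε}, Q k) ≤ ε := by
  have hdir : Directed (· ⊆ ·) fun k : {k | μ (Q k) ≤ ε} => Q k :=
    (hQ.comp (Subtype.mono_coe _)).directed_le
  rw [biUnion_eq_iUnion, hdir.measure_iUnion]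
  exact iSup_le fun k => k.2

theorem isOpen_setOf_measure_rowUnion_le (B : ℕ → Set X) (n k : ℕ) (ε : ℝ≥0∞) :
    IsOpen {f | μ (rowUnion B f n k) ≤ ε} :=
  ((finite_Iic k).image (Nat.pair n)).isOpen_setOf_of_dependsOn fun f g hfg => by
    simp only [dependsOn_rowUnion B n k hfg]

def nullUniversalSet (μ : Measure X) (B : ℕ → Set X) : Set ((ℕ → ℕ) × X) :=
  ⋂ n : ℕ, ⋃ k : ℕ,
    {p | μ (rowUnion B p.1 n k) ≤ (n : ℝ≥0∞)⁻¹ ∧ p.2 ∈ B (p.1 (Nat.pair n k))}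

theorem measure_setOf_mem_nullUniversalSet (B : ℕ → Set X) (f : ℕ → ℕ) :
    μ {y | (f, y) ∈ nullUniversalSet μ B} = 0 := by
  have hrow (n : ℕ) : μ {y | (f, y) ∈ nullUniversalSet μ B} ≤ (n : ℝ≥0∞)⁻¹ := by
    refine le_trans (measure_mono fun y hy => ?_)
      (measure_biUnion_setOf_measure_le (monotone_rowUnion B f n) _)
    obtain ⟨k, hk, hyk⟩ := mem_iUnion.1 (mem_iInter.1 hy n)
    exact mem_biUnion hk (mem_iUnion₂.2 ⟨k, le_rfl, hyk⟩)
  exact le_antisymm (ge_of_tendsto' ENNReal.tendsto_inv_nat_nhds_zero hrow) zero_le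

variable [TopologicalSpace X]

theorem isGδ_nullUniversalSet {B : ℕ → Set X} (hB : ∀ i, IsOpen (B i)) :
    IsGδ (nullUniversalSet μ B) := by
  refine .iInter fun n => IsOpen.isGδ <| isOpen_iUnion fun k => ?_
  have hpiece : {p : (ℕ → ℕ) × X |
      μ (rowUnion B p.1 n k) ≤ (n : ℝ≥0∞)⁻¹ ∧ p.2 ∈ B (p.1 (Nat.pair n k))} =
      ⋃ m, ({f | μ (rowUnion B f n k) ≤ (n : ℝ≥0∞)⁻¹} ∩ (· (Nat.pair n k)) ⁻¹' {m}) ×ˢ B m := by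
    ext ⟨f, y⟩
    simp
  rw [hpiece]
  exact isOpen_iUnion fun m => .prod
    ((isOpen_setOf_measure_rowUnion_le B n k _).inter
      ((isOpen_discrete {m}).preimage (continuous_apply (Nat.pair n k)))) (hB m)

theorem exists_subset_setOf_mem_nullUniversalSet [μ.OuterRegular] {B : ℕ → Set X}
    (hB : ∀ U, IsOpen U → ∃ c : ℕ → ℕ, U = ⋃ k, B (c k)) {A : Set X} (hA : μ A = 0) :
    ∃ f : ℕ → ℕ, A ⊆ {y | (f, y) ∈ nullUniversalSet μ B} := by
  have hsmall (n : ℕ) : ∃ U, A ⊆ U ∧ IsOpen U ∧ μ U < (n : ℝ≥0∞)⁻¹ :=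
    A.exists_isOpen_lt_of_lt _ (hA ▸ ENNReal.inv_pos.2 (ENNReal.natCast_ne_top n))
  choose U hAU hU_open hU_lt using hsmall
  choose c hc using fun n => hB (U n) (hU_open n)
  refine ⟨fun m => c m.unpair.1 m.unpair.2, fun y hy => mem_iInter.2 fun n => ?_⟩
  obtain ⟨k, hk⟩ := mem_iUnion.1 (hc n ▸ hAU n hy)
  have hrow : rowUnion B (fun m => c m.unpair.1 m.unpair.2) n k ⊆ U n := by
    simp only [rowUnion, Nat.unpair_pair, hc n]
    exact iUnion₂_subset fun j _ => subset_iUnion (fun k => B (c n k)) j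
  refine mem_iUnion.2 ⟨k, (measure_mono hrow).trans (hU_lt n).le, ?_⟩
  simpa only [Nat.unpair_pair] using hk

end MeasureTheory

theorem MeasureTheory.exists_isGδ_universal_null {X : Type*} [TopologicalSpace X]
    [SecondCountableTopology X] [MeasurableSpace X] (μ : Measure X) [μ.OuterRegular] :
    ∃ G : Set ((ℕ → ℕ) × X), IsGδ G ∧
      (∀ f : ℕ → ℕ, IsGδ {y | (f, y) ∈ G} ∧ μ {y | (f, y) ∈ G} = 0) ∧
      ∀ A : Set X, μ A = 0 → ∃ f : ℕ → ℕ, A ⊆ {y | (f, y) ∈ G} := by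
  obtain ⟨B, hB_open, hB⟩ := exists_seq_isOpen_forall_eq_iUnion X
  have hG : IsGδ (nullUniversalSet μ B) := isGδ_nullUniversalSet hB_open
  exact ⟨_, hG, fun f => ⟨hG.preimage (.prodMk_right f), measure_setOf_mem_nullUniversalSet B f⟩,
    fun _ hA => exists_subset_setOf_mem_nullUniversalSet hB hA⟩

/-- For the Haar (coin-flipping) measure `μ` on Cantor space `2^ω`, there is a
G_δ set `G ⊆ ω^ω × 2^ω` all of whose vertical sections are null G_δ sets and
such that every `μ`-null set is contained in some section; i.e. `G` is a G_δ
universal set for the null ideal. -/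
theorem exists_Gdelta_universal_null
    (μ : Measure (ℕ → Bool))
    (hμ : ∀ (s : Finset ℕ) (f : ℕ → Bool),
      μ {x : ℕ → Bool | ∀ i ∈ s, x i = f i} = (1 / 2 : ENNReal) ^ s.card) :
    ∃ G : Set ((ℕ → ℕ) × (ℕ → Bool)), IsGδ G ∧
      (∀ f : ℕ → ℕ, IsGδ {y : ℕ → Bool | (f, y) ∈ G} ∧ μ {y : ℕ → Bool | (f, y) ∈ G} = 0) ∧
      ∀ A : Set (ℕ → Bool), μ A = 0 → ∃ f : ℕ → ℕ, A ⊆ {y : ℕ → Bool | (f, y) ∈ G} := by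
  have : IsProbabilityMeasure μ := ⟨by simpa using hμ ∅ fun _ => false⟩
  exact exists_isGδ_universal_null μ
end

section
/- There exists an F_σ set U ⊆ ω^ω × 2^ω such that each vertical section U_x belongs to the σ-ideal E generated by closed null subsets of 2^ω, and every member of E is contained in some section U_x. -/
/-!
A closed null subset of Cantor space is compact, so it lies inside clopen sets of arbitrarily
small measure, and there are only countably many clopen sets. Enumerate, for each `m`, the clopen
sets of measure at most `1 / m` as `V m 0, V m 1, …`. A point `x : ℕ → ℕ` codes the closed null
sets `⋂ m, V m (x ⟨n, m⟩)` for `n : ℕ`, and the section `U_x` is their union; every member of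
`E` is covered by countably many closed null sets, each of which is such an intersection.
-/

open MeasureTheory

/-- Membership in the σ-ideal `E` generated by closed `μ`-null subsets of
Cantor space. -/
def MemClosedNullIdeal (μ : Measure (ℕ → Bool)) (A : Set (ℕ → Bool)) : Prop :=
  ∃ F : ℕ → Set (ℕ → Bool), (∀ n, IsClosed (F n) ∧ μ (F n) = 0) ∧ A ⊆ ⋃ n, F n

open Filter Topology TopologicalSpace

lemma isClosed_setOf_snd_mem_of_discrete {ι X : Type*} [TopologicalSpace ι] [DiscreteTopology ι]
    [TopologicalSpace X] {V : ι → Set X} (hV : ∀ i, IsClosed (V i)) :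
    IsClosed {q : ι × X | q.2 ∈ V q.1} := by
  have : {q : ι × X | q.2 ∈ V q.1}ᶜ = ⋃ i, {i} ×ˢ (V i)ᶜ := by
    ext ⟨i, x⟩
    simp
  exact isOpen_compl_iff.1 <| this ▸
    isOpen_iUnion fun i => (isOpen_discrete _).prod (hV i).isOpen_compl

section Clopen

variable {X : Type*} [TopologicalSpace X] [CompactSpace X] [T2Space X]
  [TotallyDisconnectedSpace X]

lemma exists_isClopen_superset_measure_lt [MeasurableSpace X] {μ : Measure X} [μ.OuterRegular]
    {F : Set X} (hF : IsClosed F) (hF₀ : μ F = 0) {ε : ENNReal} (hε : 0 < ε) :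
    ∃ C, IsClopen C ∧ F ⊆ C ∧ μ C < ε := by
  obtain ⟨O, hFO, hO, hOε⟩ := Set.exists_isOpen_lt_of_lt F ε (hF₀ ▸ hε)
  obtain ⟨C, hC, hFC, hCO⟩ := exists_clopen_of_closed_subset_open hF hO hFO
  exact ⟨C, hC, hFC, (measure_mono hCO).trans_lt hOε⟩

lemma countable_setOf_isClopen [SecondCountableTopology X] :
    {C : Set X | IsClopen C}.Countable := by
  have := Clopens.countable_iff_secondCountable.2 ‹SecondCountableTopology X›
  convert Set.countable_range ((↑) : Clopens X → Set X)
  ext C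
  exact ⟨fun h => ⟨⟨C, h⟩, rfl⟩, by rintro ⟨C, rfl⟩; exact C.isClopen⟩

lemma exists_closed_codes_covering_closed_null [SecondCountableTopology X] [MeasurableSpace X]
    (μ : Measure X) [μ.OuterRegular] (ε : ℕ → ENNReal) (hε : ∀ m, 0 < ε m) :
    ∃ V : ℕ → ℕ → Set X, (∀ m c, IsClosed (V m c) ∧ μ (V m c) ≤ ε m) ∧
      ∀ F, IsClosed F → μ F = 0 → ∀ m, ∃ c, F ⊆ V m c := by
  have hcodes (m : ℕ) : ∃ V : ℕ → Set X, {C | IsClopen C ∧ μ C ≤ ε m} = Set.range V :=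
    (countable_setOf_isClopen.mono fun _ h => h.1).exists_eq_range
      ⟨∅, isClopen_empty, by simp⟩
  choose V hV using hcodes
  refine ⟨V, fun m c => ?_, fun F hF hF₀ m => ?_⟩
  · obtain ⟨hC, hμC⟩ : V m c ∈ {C | IsClopen C ∧ μ C ≤ ε m} := hV m ▸ ⟨c, rfl⟩
    exact ⟨hC.isClosed, hμC⟩
  · obtain ⟨C, hC, hFC, hμC⟩ := exists_isClopen_superset_measure_lt hF hF₀ (hε m)
    obtain ⟨c, rfl⟩ : C ∈ Set.range (V m) := hV m ▸ ⟨hC, hμC.le⟩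
    exact ⟨c, hFC⟩

end Clopen

lemma exists_Fsigma_universal_of_closed_codes (μ : Measure (ℕ → Bool)) {ε : ℕ → ENNReal}
    (hε : Tendsto ε atTop (𝓝 0)) {V : ℕ → ℕ → Set (ℕ → Bool)}
    (hV : ∀ m c, IsClosed (V m c) ∧ μ (V m c) ≤ ε m)
    (hcover : ∀ F, IsClosed F → μ F = 0 → ∀ m, ∃ c, F ⊆ V m c) :
    ∃ U : Set ((ℕ → ℕ) × (ℕ → Bool)), IsFsigma U ∧
      (∀ x : ℕ → ℕ, MemClosedNullIdeal μ {y : ℕ → Bool | (x, y) ∈ U}) ∧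
      ∀ A : Set (ℕ → Bool), MemClosedNullIdeal μ A →
        ∃ x : ℕ → ℕ, A ⊆ {y : ℕ → Bool | (x, y) ∈ U} := by
  refine ⟨⋃ n, ⋂ m, {p | p.2 ∈ V m (p.1 (Nat.pair n m))}, ⟨_, fun n => ?_, rfl⟩,
    fun x => ⟨fun n => ⋂ m, V m (x (Nat.pair n m)), fun n => ⟨?_, ?_⟩,
      fun y hy => by simpa using hy⟩, ?_⟩
  · refine isClosed_iInter fun m =>
      (isClosed_setOf_snd_mem_of_discrete fun c => (hV m c).1).preimage
        (f := fun p : (ℕ → ℕ) × (ℕ → Bool) => (p.1 (Nat.pair n m), p.2)) ?_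
    fun_prop
  · exact isClosed_iInter fun m => (hV m _).1
  · refine nonpos_iff_eq_zero.1 (ge_of_tendsto' hε fun m => ?_)
    exact (measure_mono (Set.iInter_subset _ m)).trans (hV m _).2
  · rintro A ⟨F, hF, hAF⟩
    choose c hc using fun n => hcover (F n) (hF n).1 (hF n).2
    refine ⟨fun j => c (Nat.unpair j).1 (Nat.unpair j).2, fun y hy => ?_⟩
    obtain ⟨n, hn⟩ := Set.mem_iUnion.1 (hAF hy)
    refine Set.mem_iUnion.2 ⟨n, Set.mem_iInter.2 fun m => ?_⟩
    simpa [Nat.unpair_pair] using hc n m hn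

/-- For the Haar (coin-flipping) measure `μ` on `2^ω`, there is an F_σ set
`U ⊆ ω^ω × 2^ω` whose sections all belong to the σ-ideal `E` generated by
closed null sets, and every member of `E` is contained in some section. -/
theorem exists_Fsigma_universal_E
    (μ : Measure (ℕ → Bool))
    (hμ : ∀ (s : Finset ℕ) (f : ℕ → Bool),
      μ {x : ℕ → Bool | ∀ i ∈ s, x i = f i} = (1 / 2 : ENNReal) ^ s.card) :
    ∃ U : Set ((ℕ → ℕ) × (ℕ → Bool)), IsFsigma U ∧
      (∀ x : ℕ → ℕ, MemClosedNullIdeal μ {y : ℕ → Bool | (x, y) ∈ U}) ∧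
      ∀ A : Set (ℕ → Bool), MemClosedNullIdeal μ A →
        ∃ x : ℕ → ℕ, A ⊆ {y : ℕ → Bool | (x, y) ∈ U} := by
  have hμ_univ : μ Set.univ = 1 := by simpa using hμ ∅ fun _ => false
  have : IsFiniteMeasure μ := ⟨by simp [hμ_univ]⟩
  obtain ⟨V, hV, hcover⟩ := exists_closed_codes_covering_closed_null μ
    (fun m => (m : ENNReal)⁻¹) fun m => ENNReal.inv_pos.2 (ENNReal.natCast_ne_top m)
  exact exists_Fsigma_universal_of_closed_codes μ ENNReal.tendsto_inv_nat_nhds_zero hV hcover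
end

section
/- No K_σ (σ-compact) subset of ω^ω × ω^ω can be a universal set for the σ-ideal K_σ of subsets of ω^ω: if U ⊆ ω^ω × ω^ω is σ-compact with all sections σ-compact, then some σ-compact subset of ω^ω is not contained in any vertical section of U. -/
lemma exists_not_mem_of_isSigmaCompact (B : Set (ℕ → ℕ)) (hB : IsSigmaCompact B) :
    ∃ g : ℕ → ℕ, g ∉ B := by
  obtain ⟨K, hK, hKU⟩ := hB
  have hbound : ∀ n : ℕ, ∃ b : ℕ, ∀ f ∈ K n, f n < b := by
    intro n
    rcases (K n).eq_empty_or_nonempty with h | h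
    · exact ⟨0, by simp [h]⟩
    · obtain ⟨f₀, hf₀, hmax⟩ := (hK n).exists_isMaxOn h
        (continuous_apply n).continuousOn
      exact ⟨f₀ n + 1, fun f hf => Nat.lt_succ_of_le (hmax hf)⟩
  choose g hg using hbound
  refine ⟨g, fun hgB => ?_⟩
  rw [← hKU] at hgB
  obtain ⟨_, ⟨n, rfl⟩, hn⟩ := hgB
  exact lt_irrefl _ (hg n g hn)

/-- No σ-compact subset of `ω^ω × ω^ω` can be a universal set for the σ-ideal
`K_σ` of subsets of Baire space: if `U` is σ-compact (with all its vertical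
sections σ-compact), then some σ-compact subset of `ω^ω` is not contained in
any vertical section of `U`. -/
theorem no_sigmaCompact_universal_for_Ksigma
    (U : Set ((ℕ → ℕ) × (ℕ → ℕ))) (hU : IsSigmaCompact U)
    (hsec : ∀ x : ℕ → ℕ, IsSigmaCompact {y : ℕ → ℕ | (x, y) ∈ U}) :
    ∃ A : Set (ℕ → ℕ), IsSigmaCompact A ∧ ∀ x : ℕ → ℕ, ¬ A ⊆ {y : ℕ → ℕ | (x, y) ∈ U} := by
  obtain ⟨g, hg⟩ := exists_not_mem_of_isSigmaCompact (Prod.snd '' U)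
    (hU.image continuous_snd)
  refine ⟨{g}, isCompact_singleton.isSigmaCompact, fun x hsub => ?_⟩
  exact hg ⟨(x, g), hsub rfl, rfl⟩
end

section
/- There exists a G_δ set G ⊆ ω^ω × ω^ω that is universal for the Laver ideal: each vertical section G_x is not strongly dominating, and every subset of ω^ω that is not strongly dominating is contained in some section G_x. -/
/-! The sets `D_Φ` form a base of the Laver ideal, so it suffices to parametrize all of them by
one G_δ set: a point `x ∈ ω^ω` codes `Φ = x ∘ encode`, and
`{(x, f) | f n < x ⌜f↾n⌝ for infinitely many n}` is G_δ because each condition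
`f n < x ⌜f↾n⌝` depends on only finitely many coordinates of `(x, f)`. -/

open Filter Set

/-- `A ⊆ ω^ω` is strongly dominating if for every `Φ : ω^{<ω} → ω` there is
`f ∈ A` with `f n ≥ Φ (f↾n)` for all but finitely many `n`. Finite sequences
are encoded as lists, `f↾n = [f 0, …, f (n-1)]`. -/
def StronglyDominating (A : Set (ℕ → ℕ)) : Prop :=
  ∀ Φ : List ℕ → ℕ, ∃ f ∈ A, ∀ᶠ n in Filter.atTop, Φ ((List.range n).map f) ≤ f n

theorem isGδ_setOf_frequently_atTop {X : Type*} [TopologicalSpace X] {P : ℕ → X → Prop}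
    (hP : ∀ n, IsOpen {x | P n x}) : IsGδ {x | ∃ᶠ n in atTop, P n x} := by
  have hset : {x | ∃ᶠ n in atTop, P n x} = ⋂ N, ⋃ n, ⋃ (_ : N ≤ n), {x | P n x} := by
    ext x
    simp only [mem_ofPred_eq, frequently_atTop, mem_iInter, mem_iUnion, exists_prop]
  rw [hset]
  exact .iInter fun N => (isOpen_biUnion fun n _ => hP n).isGδ

theorem continuous_list_map_apply {ι α : Type*} [TopologicalSpace α] (l : List ι) :
    Continuous fun f : ι → α => l.map f := by
  induction l with
  | nil => exact continuous_const
  | cons a l ih => exact List.continuous_cons.comp ((continuous_apply a).prodMk ih)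

/-- The set `D_Φ`. -/
def laverSet (Φ : List ℕ → ℕ) : Set (ℕ → ℕ) :=
  {f | ∃ᶠ n in atTop, f n < Φ ((List.range n).map f)}

theorem StronglyDominating.not_subset_laverSet {A : Set (ℕ → ℕ)} (hA : StronglyDominating A)
    (Φ : List ℕ → ℕ) : ¬ A ⊆ laverSet Φ := fun hsub => by
  obtain ⟨f, hfA, hdom⟩ := hA Φ
  obtain ⟨n, hge, hlt⟩ := (hdom.and_frequently (hsub hfA)).exists
  exact hge.not_gt hlt

theorem not_stronglyDominating_iff_subset_laverSet {A : Set (ℕ → ℕ)} :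
    ¬ StronglyDominating A ↔ ∃ Φ, A ⊆ laverSet Φ := by
  refine ⟨fun hA => ?_, fun ⟨Φ, hsub⟩ hA => hA.not_subset_laverSet Φ hsub⟩
  simp only [StronglyDominating, not_forall, not_exists, not_and, not_eventually, not_le] at hA
  exact hA

theorem not_stronglyDominating_laverSet (Φ : List ℕ → ℕ) :
    ¬ StronglyDominating (laverSet Φ) :=
  not_stronglyDominating_iff_subset_laverSet.2 ⟨Φ, subset_rfl⟩

def laverUniversalSet : Set ((ℕ → ℕ) × (ℕ → ℕ)) :=
  {p | p.2 ∈ laverSet (p.1 ∘ Encodable.encode)}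

theorem isGδ_laverUniversalSet : IsGδ laverUniversalSet := by
  refine isGδ_setOf_frequently_atTop fun n =>
    isOpen_lt ((continuous_apply n).comp continuous_snd) ?_
  have hcode : Continuous fun q : (ℕ → ℕ) × List ℕ => q.1 (Encodable.encode q.2) :=
    continuous_prod_of_discrete_right.2 fun l => continuous_apply (Encodable.encode l)
  exact hcode.comp (continuous_fst.prodMk ((continuous_list_map_apply _).comp continuous_snd))

theorem setOf_mem_laverUniversalSet (x : ℕ → ℕ) :
    {y | (x, y) ∈ laverUniversalSet} = laverSet (x ∘ Encodable.encode) := by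
  ext
  rfl

theorem exists_setOf_mem_laverUniversalSet_eq (Φ : List ℕ → ℕ) :
    ∃ x, {y | (x, y) ∈ laverUniversalSet} = laverSet Φ := by
  refine ⟨Φ ∘ Denumerable.ofNat (List ℕ), ?_⟩
  rw [setOf_mem_laverUniversalSet]
  congr 1
  funext l
  simp only [Function.comp_apply, Denumerable.ofNat_encode]

/-- There is a G_δ set `G ⊆ ω^ω × ω^ω` universal for the Laver ideal (the
family of non–strongly dominating sets): every section of `G` is not strongly
dominating, and every non–strongly dominating set is contained in a section. -/
theorem exists_Gdelta_universal_Laver :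
    ∃ G : Set ((ℕ → ℕ) × (ℕ → ℕ)), IsGδ G ∧
      (∀ x : ℕ → ℕ, ¬ StronglyDominating {y : ℕ → ℕ | (x, y) ∈ G}) ∧
      ∀ A : Set (ℕ → ℕ), ¬ StronglyDominating A →
        ∃ x : ℕ → ℕ, A ⊆ {y : ℕ → ℕ | (x, y) ∈ G} := by
  refine ⟨laverUniversalSet, isGδ_laverUniversalSet, fun x => ?_, fun A hA => ?_⟩
  · rw [setOf_mem_laverUniversalSet]
    exact not_stronglyDominating_laverSet _
  · obtain ⟨Φ, hsub⟩ := not_stronglyDominating_iff_subset_laverSet.1 hA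
    obtain ⟨x, hx⟩ := exists_setOf_mem_laverUniversalSet_eq Φ
    exact ⟨x, hx ▸ hsub⟩
end

section
/- Given x ∈ 2^ω and a partition P of ω into consecutive finite intervals {I_n : n ∈ ω}, the set F_{x,P} = {y ∈ 2^ω : x↾I_n ≠ y↾I_n for all but finitely many n} is an F_σ meager subset of 2^ω. -/
/-- Given `x ∈ 2^ω` and a partition of `ω` into consecutive intervals
`I_n = [a n, a (n+1))` (with `a` strictly increasing, `a 0 = 0`), the set
`F_{x,P} = {y : x↾I_n ≠ y↾I_n for all but finitely many n}` is an F_σ meager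
subset of Cantor space. -/
theorem F_xP_isFsigma_and_meager (x : ℕ → Bool) (a : ℕ → ℕ)
    (ha0 : a 0 = 0) (ha : StrictMono a) :
    IsFsigma {y : ℕ → Bool |
        ∀ᶠ n in Filter.atTop, ∃ m ∈ Set.Ico (a n) (a (n + 1)), x m ≠ y m} ∧
    IsMeagre {y : ℕ → Bool |
        ∀ᶠ n in Filter.atTop, ∃ m ∈ Set.Ico (a n) (a (n + 1)), x m ≠ y m} := by
  set F : ℕ → Set (ℕ → Bool) := fun N =>
    ⋂ n, ⋂ (_ : N ≤ n), {y | ∃ m ∈ Set.Ico (a n) (a (n + 1)), x m ≠ y m} with hF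
  have hclosed : ∀ N, IsClosed (F N) := by
    intro N
    refine isClosed_iInter fun n => isClosed_iInter fun _ => ?_
    have : {y : ℕ → Bool | ∃ m ∈ Set.Ico (a n) (a (n + 1)), x m ≠ y m}
        = ⋃ m ∈ Set.Ico (a n) (a (n + 1)), {y : ℕ → Bool | x m ≠ y m} := by
      ext y; simp
    rw [this]
    refine Set.Finite.isClosed_biUnion (Set.finite_Ico _ _) fun m _ => ?_
    have : {y : ℕ → Bool | x m ≠ y m} = (fun y : ℕ → Bool => y m) ⁻¹' {x m}ᶜ := by
      ext y
      simp only [Set.mem_setOf_eq, Set.mem_preimage, Set.mem_compl_iff,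
        Set.mem_singleton_iff]
      exact ne_comm
    rw [this]
    exact (isClosed_discrete _).preimage (continuous_apply m)
  have hunion : {y : ℕ → Bool |
      ∀ᶠ n in Filter.atTop, ∃ m ∈ Set.Ico (a n) (a (n + 1)), x m ≠ y m} = ⋃ N, F N := by
    ext y
    simp [hF, Filter.eventually_atTop, Set.mem_iUnion]
  have hint : ∀ N, interior (F N) = ∅ := by
    intro N
    by_contra h
    obtain ⟨y, hy⟩ := Set.nonempty_iff_ne_empty.mpr h
    obtain ⟨I, u, hu, hsub⟩ := isOpen_pi_iff.mp isOpen_interior y hy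
    -- choose n ≥ N with a n larger than all elements of I
    set M := if h : I.Nonempty then I.max' h + 1 else 0 with hM
    have hMI : ∀ i ∈ I, i < M := by
      intro i hi
      have hne : I.Nonempty := ⟨i, hi⟩
      simp only [hM, dif_pos hne]
      exact Nat.lt_succ_of_le (I.le_max' i hi)
    set n := max N M with hn
    have haM : M ≤ a n := (le_max_right N M).trans (ha.id_le n)
    -- define z : agree with y on I, agree with x on [a n, a (n+1))
    set z : ℕ → Bool := fun m => if m < M then y m else x m with hz
    have hzmem : z ∈ (I : Set ℕ).pi u := by
      intro i hi
      have : z i = y i := by simp [hz, hMI i hi]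
      rw [this]
      exact (hu i hi).2
    have hzF : z ∈ F N := interior_subset (hsub hzmem)
    have := Set.mem_iInter.mp (Set.mem_iInter.mp hzF n) (le_max_left N M)
    obtain ⟨m, hm, hne⟩ := this
    apply hne
    have hm1 := hm.1
    have : ¬ m < M := by omega
    simp [hz, this]
  constructor
  · exact ⟨F, hclosed, hunion⟩
  · rw [hunion]
    refine isMeagre_iUnion fun N => ?_
    rw [isMeagre_iff_countable_union_isNowhereDense]
    refine ⟨{F N}, ?_, Set.countable_singleton _, by simp⟩
    intro t ht
    rw [Set.mem_singleton_iff] at ht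
    subst ht
    exact ((hclosed N).isNowhereDense_iff).mpr (hint N)
end

section
/- The family {F_{x,P} : x ∈ 2^ω, P a partition of ω into intervals} is a base for the meager ideal on 2^ω: every meager subset of 2^ω is contained in some F_{x,P}, where F_{x,P} = {y ∈ 2^ω : x↾I_n ≠ y↾I_n for all but finitely many n}. -/
open Set

/-- One extension step: given a dense open set `U` and a finite condition `s` on
coordinates `< n`, there is an extension `t` up to some `m ≥ n` forcing into `U`. -/
lemma lemA (U : Set (ℕ → Bool)) (hUo : IsOpen U) (hUd : Dense U) (s : ℕ → Bool) (n : ℕ) :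
    ∃ m, n ≤ m ∧ ∃ t : ℕ → Bool, (∀ i < n, t i = s i) ∧ ∀ y, (∀ i < m, y i = t i) → y ∈ U := by
  have hC : IsOpen ((↑(Finset.range n) : Set ℕ).pi fun i => ({s i} : Set Bool)) := by
    refine isOpen_set_pi (Finset.finite_toSet _) fun i _ => isOpen_discrete _
  have hsC : s ∈ (↑(Finset.range n) : Set ℕ).pi fun i => ({s i} : Set Bool) := by
    intro i _; rfl
  obtain ⟨z, hzU, hzC⟩ := hUd.exists_mem_open hC ⟨s, hsC⟩
  obtain ⟨I, u, h1, h2⟩ := isOpen_pi_iff.mp hUo z hzU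
  refine ⟨max n (I.sup id + 1), le_max_left _ _, z, ?_, ?_⟩
  · intro i hi
    exact hzC i (by simpa using hi)
  · intro y hy
    refine h2 fun i hi => ?_
    have : y i = z i := hy i (lt_of_lt_of_le (Nat.lt_succ_of_le (Finset.le_sup (f := id) hi))
      (le_max_right _ _))
    rw [this]
    exact (h1 i hi).2

/-- Handling a finite list of prefixes at once. -/
lemma lemB (U : Set (ℕ → Bool)) (hUo : IsOpen U) (hUd : Dense U) (n : ℕ)
    (L : List (ℕ → Bool)) :
    ∃ m, n ≤ m ∧ ∃ x : ℕ → Bool, ∀ y, (∀ i, n ≤ i → i < m → y i = x i) →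
      (∃ s ∈ L, ∀ i < n, y i = s i) → y ∈ U := by
  induction L with
  | nil => exact ⟨n, le_rfl, fun _ => false, fun y _ h => by simp at h⟩
  | cons s L ih =>
    obtain ⟨m₁, hm₁, x₁, hx₁⟩ := ih
    obtain ⟨m₂, hm₂, t, ht1, ht2⟩ :=
      lemA U hUo hUd (fun i => if i < n then s i else x₁ i) m₁
    refine ⟨m₂, le_trans hm₁ hm₂, t, ?_⟩
    intro y hy hmem
    obtain ⟨s', hs', hpre⟩ := hmem
    rcases List.mem_cons.mp hs' with rfl | hs'L
    · -- y has prefix s; y agrees with t on [n, m₂); below n, t = s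
      refine ht2 y fun i hi => ?_
      rcases lt_or_ge i n with h | h
      · rw [hpre i h, ht1 i (lt_of_lt_of_le h hm₁), if_pos h]
      · exact hy i h hi
    · -- prefix in L: use IH; y agrees with x₁ on [n, m₁)
      refine hx₁ y (fun i hin him₁ => ?_) ⟨s', hs'L, hpre⟩
      rw [hy i hin (lt_of_lt_of_le him₁ hm₂), ht1 i him₁, if_neg (not_lt.mpr hin)]

/-- Key: given dense open `U` and `n`, there is an interval `[n, m)` and values `x`
on it such that any `y` agreeing with `x` there lies in `U`, regardless of `y`
elsewhere. -/
lemma lemC (U : Set (ℕ → Bool)) (hUo : IsOpen U) (hUd : Dense U) (n : ℕ) :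
    ∃ m, n < m ∧ ∃ x : ℕ → Bool, ∀ y, (∀ i, n ≤ i → i < m → y i = x i) → y ∈ U := by
  classical
  set L : List (ℕ → Bool) :=
    (Finset.univ : Finset (Fin n → Bool)).toList.map
      (fun f i => if h : i < n then f ⟨i, h⟩ else false) with hL
  obtain ⟨m, hm, x, hx⟩ := lemB U hUo hUd n L
  refine ⟨m + 1, Nat.lt_succ_of_le hm, x, fun y hy => ?_⟩
  refine hx y (fun i hin him => hy i hin (Nat.lt_succ_of_lt him)) ?_
  refine ⟨fun i => if h : i < n then y i else false, ?_, ?_⟩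
  · rw [hL]
    refine List.mem_map.mpr ⟨fun j : Fin n => y j, ?_, ?_⟩
    · simp [Finset.mem_toList]
    · funext i; by_cases h : i < n <;> simp [h]
  · intro i hi; simp [hi]

lemma interval_unique {a : ℕ → ℕ} (ha : StrictMono a) {i n n' : ℕ}
    (h1 : a n ≤ i) (h2 : i < a (n + 1)) (h3 : a n' ≤ i) (h4 : i < a (n' + 1)) : n = n' := by
  rcases lt_trichotomy n n' with h | h | h
  · exact absurd (lt_of_lt_of_le h2 (le_trans (ha.monotone (Nat.succ_le_of_lt h)) h3))
      (lt_irrefl i)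
  · exact h
  · exact absurd (lt_of_lt_of_le h4 (le_trans (ha.monotone (Nat.succ_le_of_lt h)) h1))
      (lt_irrefl i)

/-- Bartoszyński–Judah characterization: the sets
`F_{x,P} = {y : x↾I_n ≠ y↾I_n for all but finitely many n}`, where `x ∈ 2^ω`
and `P` is a partition of `ω` into consecutive intervals `I_n = [a n, a (n+1))`,
form a base of the meager ideal on Cantor space: every meager set is contained
in some `F_{x,P}`. -/
theorem meager_subset_FxP (A : Set (ℕ → Bool)) (hA : IsMeagre A) :
    ∃ (x : ℕ → Bool) (a : ℕ → ℕ), a 0 = 0 ∧ StrictMono a ∧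
      A ⊆ {y : ℕ → Bool |
        ∀ᶠ n in Filter.atTop, ∃ m ∈ Set.Ico (a n) (a (n + 1)), x m ≠ y m} := by
  classical
  rw [IsMeagre] at hA
  obtain ⟨S, hSo, hSd, hScnt, hSsub⟩ := mem_residual_iff.mp hA
  -- turn S into a sequence of dense open sets
  obtain ⟨U, hU⟩ := (hScnt.insert Set.univ).exists_eq_range (insert_nonempty _ _)
  have hUo : ∀ n, IsOpen (U n) := by
    intro n
    have : U n ∈ insert Set.univ S := hU ▸ mem_range_self n
    rcases this with h | h
    · rw [h]; exact isOpen_univ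
    · exact hSo _ h
  have hUd : ∀ n, Dense (U n) := by
    intro n
    have : U n ∈ insert Set.univ S := hU ▸ mem_range_self n
    rcases this with h | h
    · rw [h]; exact dense_univ
    · exact hSd _ h
  have hUsub : ∀ y, (∀ n, y ∈ U n) → y ∈ Aᶜ := by
    intro y hy
    refine hSsub fun t ht => ?_
    have : t ∈ range U := hU ▸ mem_insert_of_mem _ ht
    obtain ⟨n, rfl⟩ := this
    exact hy n
  -- increasing finite intersections
  set V : ℕ → Set (ℕ → Bool) := fun n => ⋂ k ∈ Finset.range (n + 1), U k with hV
  have hVo : ∀ n, IsOpen (V n) := fun n =>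
    isOpen_biInter_finset fun k _ => hUo k
  have hVd : ∀ n, Dense (V n) := by
    intro n
    induction n with
    | zero => simpa [hV] using hUd 0
    | succ n ih =>
      have : V (n + 1) = V n ∩ U (n + 1) := by
        rw [hV]
        simp only [Finset.range_add_one (n := n + 1)]
        rw [Finset.set_biInter_insert]
        exact inter_comm _ _
      rw [this]
      exact Dense.inter_of_isOpen_left ih (hUd (n + 1)) (hVo n)
  have hVsub : ∀ n k, k ≤ n → V n ⊆ U k := fun n k hk =>
    biInter_subset_of_mem (Finset.mem_range.mpr (Nat.lt_succ_of_le hk))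
  have key : ∀ n b, ∃ p : ℕ × (ℕ → Bool), b < p.1 ∧
      ∀ y, (∀ i, b ≤ i → i < p.1 → y i = p.2 i) → y ∈ V n := by
    intro n b
    obtain ⟨m, hm, x, hx⟩ := lemC (V n) (hVo n) (hVd n) b
    exact ⟨(m, x), hm, hx⟩
  choose F hF1 hF2 using key
  set a : ℕ → ℕ := fun n => Nat.rec (motive := fun _ => ℕ) 0 (fun n b => (F n b).1) n with ha
  have ha0 : a 0 = 0 := rfl
  have haS : ∀ n, a (n + 1) = (F n (a n)).1 := fun n => rfl
  have hmono : StrictMono a := strictMono_nat_of_lt_succ fun n => by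
    rw [haS]; exact hF1 n (a n)
  have hex : ∀ i, ∃ n, i < a (n + 1) := fun i =>
    ⟨i, lt_of_lt_of_le (Nat.lt_succ_self i) (hmono.le_apply)⟩
  set x : ℕ → Bool := fun i => (F (Nat.find (hex i)) (a (Nat.find (hex i)))).2 i with hx
  have hfind_le : ∀ i, a (Nat.find (hex i)) ≤ i := by
    intro i
    rcases Nat.eq_zero_or_pos (Nat.find (hex i)) with h | h
    · rw [h, ha0]; exact Nat.zero_le i
    · have h2 := Nat.find_min (hex i) (Nat.pred_lt h.ne')
      have h3 : (Nat.find (hex i)).pred + 1 = Nat.find (hex i) := Nat.succ_pred_eq_of_pos h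
      rw [h3] at h2
      exact not_lt.mp h2
  refine ⟨x, a, ha0, hmono, ?_⟩
  intro y hyA
  have hk' : ¬ ∀ n, y ∈ U n := fun h => (hUsub y h) hyA
  push_neg at hk'
  obtain ⟨k, hk⟩ := hk'
  refine Filter.eventually_atTop.mpr ⟨k, fun n hn => ?_⟩
  by_contra hcon
  push_neg at hcon
  have hyV : y ∈ V n := by
    refine hF2 n (a n) y fun i hi1 hi2 => ?_
    have hi2' : i < a (n + 1) := by rw [haS]; exact hi2
    have hfi : Nat.find (hex i) = n :=
      interval_unique hmono (hfind_le i) (Nat.find_spec (hex i)) hi1 hi2'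
    have hxy := hcon i ⟨hi1, hi2'⟩
    rw [← hxy, hx]
    simp only [hfi]
  exact hk (hVsub n k hn hyV)
end

section
/- There exists an F_σ set U ⊆ ω^ω × 2^ω that is universal for the meager ideal on Cantor space: every section U_x is meager in 2^ω and every meager subset of 2^ω is contained in some section U_x. -/
/-!
Fix an enumerated countable base `b` of a second countable space `X`. Choosing, for every `m`, a
nonempty basic open subset of `b m` yields a dense open set, and every dense open set contains
one obtained this way. A code `x : ℕ → ℕ` makes such a choice for each `n`, giving dense open sets
`codedOpen b x n`. The set of pairs `(x, y)` with `y ∉ codedOpen b x n` for some `n` is F_σ because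
each coordinate of `x` ranges over a discrete space, its sections are countable unions of closed
nowhere dense sets, and a meagre set, lying in the union of the complements of some dense open
sets `G n`, lies in the section of any code with `codedOpen b x n ⊆ G n`.
-/

open Set TopologicalSpace

lemma IsMeagre.exists_seq_dense_isOpen {X : Type*} [TopologicalSpace X] {A : Set X}
    (hA : IsMeagre A) :
    ∃ G : ℕ → Set X, (∀ n, IsOpen (G n)) ∧ (∀ n, Dense (G n)) ∧ A ⊆ ⋃ n, (G n)ᶜ := by
  obtain ⟨S, hSo, hSd, hSc, hSA⟩ := mem_residual_iff.mp hA
  obtain ⟨G, hG⟩ := (hSc.insert univ).exists_eq_range (insert_nonempty _ _)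
  have hGS (n : ℕ) : G n = univ ∨ G n ∈ S := by
    rw [← mem_insert_iff, hG]
    exact mem_range_self n
  refine ⟨G, fun n => ?_, fun n => ?_, ?_⟩
  · rcases hGS n with h | h
    exacts [h ▸ isOpen_univ, hSo _ h]
  · rcases hGS n with h | h
    exacts [h ▸ dense_univ, hSd _ h]
  · rw [← compl_iInter, ← sInter_range, ← hG, sInter_insert, univ_inter, subset_compl_comm]
    exact hSA

lemma IsOpen.isMeagre_compl_of_dense {X : Type*} [TopologicalSpace X] {G : Set X}
    (hGo : IsOpen G) (hGd : Dense G) : IsMeagre Gᶜ := by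
  rw [IsMeagre, compl_compl]
  exact residual_of_dense_open hGo hGd

lemma isOpen_setOf_snd_mem_apply_fst {Y X ι : Type*} [TopologicalSpace Y]
    [TopologicalSpace X] [TopologicalSpace ι] [DiscreteTopology ι] {f : Y → ι}
    (hf : Continuous f) {T : ι → Set X} (hT : ∀ k, IsOpen (T k)) : IsOpen {p : Y × X | p.2 ∈ T (f p.1)} := by
  have : {p : Y × X | p.2 ∈ T (f p.1)} = ⋃ k, (f ⁻¹' {k}) ×ˢ T k := by
    ext p
    simp
  rw [this]
  exact isOpen_iUnion fun k => (hf.isOpen_preimage _ (isOpen_discrete _)).prod (hT k)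

section UniversalMeagre

variable {X : Type*} {b : ℕ → Set X}

variable (b) in
/-- Invalid codes `k` fall back to `b m` itself, so that every code `x` gives a dense
`codedOpen b x n`. -/
noncomputable def basicShrink (m k : ℕ) : Set X :=
  open Classical in if (b m ∩ b k).Nonempty then b m ∩ b k else b m

lemma basicShrink_subset (m k : ℕ) : basicShrink b m k ⊆ b m := by
  unfold basicShrink
  split_ifs
  exacts [inter_subset_left, subset_rfl]

lemma Set.Nonempty.basicShrink {m : ℕ} (h : (b m).Nonempty) (k : ℕ) :
    (basicShrink b m k).Nonempty := by
  unfold _root_.basicShrink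
  split_ifs with hk
  exacts [hk, h]

variable (b) in
noncomputable def codedOpen (x : ℕ → ℕ) (n : ℕ) : Set X :=
  ⋃ m, basicShrink b m (x (Nat.pair n m))

variable (b) in
noncomputable def universalMeagre : Set ((ℕ → ℕ) × X) :=
  ⋃ n, {p | p.2 ∉ codedOpen b p.1 n}

variable [TopologicalSpace X]

lemma isOpen_basicShrink (hb : IsTopologicalBasis (range b)) (m k : ℕ) :
    IsOpen (basicShrink b m k) := by
  unfold basicShrink
  split_ifs
  exacts [(hb.isOpen (mem_range_self m)).inter (hb.isOpen (mem_range_self k)),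
    hb.isOpen (mem_range_self m)]

lemma exists_basicShrink_subset (hb : IsTopologicalBasis (range b)) {G : Set X}
    (hGo : IsOpen G) (hGd : Dense G) (m : ℕ) : ∃ k, basicShrink b m k ⊆ G := by
  rcases (b m).eq_empty_or_nonempty with hm | hm
  · exact ⟨0, (basicShrink_subset m 0).trans (hm ▸ empty_subset G)⟩
  obtain ⟨y, hym, hyG⟩ := hGd.inter_open_nonempty _ (hb.isOpen (mem_range_self m)) hm
  obtain ⟨_, ⟨k, rfl⟩, hyk, hkG⟩ := hb.exists_subset_of_mem_open (u := b m ∩ G) ⟨hym, hyG⟩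
    ((hb.isOpen (mem_range_self m)).inter hGo)
  have hne : (b m ∩ b k).Nonempty := ⟨y, hym, hyk⟩
  refine ⟨k, ?_⟩
  simp only [basicShrink, hne, if_true]
  exact fun z hz => (hkG hz.2).2

lemma isOpen_codedOpen (hb : IsTopologicalBasis (range b)) (x : ℕ → ℕ) (n : ℕ) :
    IsOpen (codedOpen b x n) :=
  isOpen_iUnion fun m => isOpen_basicShrink hb m _

lemma dense_codedOpen (hb : IsTopologicalBasis (range b)) (x : ℕ → ℕ) (n : ℕ) :
    Dense (codedOpen b x n) := by
  refine dense_iff_inter_open.mpr fun V hVo ⟨y, hyV⟩ => ?_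
  obtain ⟨_, ⟨m, rfl⟩, hym, hmV⟩ := hb.exists_subset_of_mem_open hyV hVo
  obtain ⟨z, hz⟩ := Set.Nonempty.basicShrink ⟨y, hym⟩ (x (Nat.pair n m))
  exact ⟨z, hmV (basicShrink_subset m _ hz), mem_iUnion_of_mem m hz⟩

lemma exists_codedOpen_subset (hb : IsTopologicalBasis (range b)) {G : ℕ → Set X}
    (hGo : ∀ n, IsOpen (G n)) (hGd : ∀ n, Dense (G n)) :
    ∃ x : ℕ → ℕ, ∀ n, codedOpen b x n ⊆ G n := by
  choose k hk using fun n => exists_basicShrink_subset hb (hGo n) (hGd n)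
  refine ⟨fun j => k j.unpair.1 j.unpair.2, fun n => iUnion_subset fun m => ?_⟩
  simpa only [Nat.unpair_pair] using hk n m

lemma isFsigma_universalMeagre (hb : IsTopologicalBasis (range b)) :
    IsFsigma (universalMeagre b) := by
  refine ⟨_, fun n => ?_, rfl⟩
  refine isOpen_compl_iff.mp ?_
  simp only [compl_ofPred, not_not, codedOpen, mem_iUnion, ofPred_exists]
  exact isOpen_iUnion fun m => isOpen_setOf_snd_mem_apply_fst
    (f := fun x : ℕ → ℕ => x (Nat.pair n m)) (continuous_apply _) (isOpen_basicShrink hb m)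

lemma isMeagre_universalMeagre_section (hb : IsTopologicalBasis (range b)) (x : ℕ → ℕ) :
    IsMeagre {y | (x, y) ∈ universalMeagre b} := by
  have : {y | (x, y) ∈ universalMeagre b} = ⋃ n, (codedOpen b x n)ᶜ := by
    ext y
    simp [universalMeagre]
  rw [this]
  exact isMeagre_iUnion fun n =>
    (isOpen_codedOpen hb x n).isMeagre_compl_of_dense (dense_codedOpen hb x n)

lemma IsMeagre.subset_universalMeagre_section (hb : IsTopologicalBasis (range b)) {A : Set X}
    (hA : IsMeagre A) : ∃ x : ℕ → ℕ, A ⊆ {y | (x, y) ∈ universalMeagre b} := by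
  obtain ⟨G, hGo, hGd, hAG⟩ := hA.exists_seq_dense_isOpen
  obtain ⟨x, hx⟩ := exists_codedOpen_subset hb hGo hGd
  refine ⟨x, hAG.trans fun y hy => ?_⟩
  obtain ⟨n, hn⟩ := mem_iUnion.mp hy
  exact mem_iUnion_of_mem n fun h => hn (hx n h)

end UniversalMeagre

theorem exists_isFsigma_universal_isMeagre (X : Type*) [TopologicalSpace X]
    [SecondCountableTopology X] :
    ∃ U : Set ((ℕ → ℕ) × X), IsFsigma U ∧ (∀ x : ℕ → ℕ, IsMeagre {y : X | (x, y) ∈ U}) ∧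
      ∀ A : Set X, IsMeagre A → ∃ x : ℕ → ℕ, A ⊆ {y : X | (x, y) ∈ U} := by
  obtain ⟨b, hb⟩ := exists_seq_basis X
  exact ⟨universalMeagre b, isFsigma_universalMeagre hb, isMeagre_universalMeagre_section hb,
    fun _ hA => hA.subset_universalMeagre_section hb⟩

/-- There is an F_σ set `U ⊆ ω^ω × 2^ω` universal for the meager ideal on
Cantor space: every section is meager and every meager subset of `2^ω` is
contained in some section. -/
theorem exists_Fsigma_universal_meager_cantor :
    ∃ U : Set ((ℕ → ℕ) × (ℕ → Bool)), IsFsigma U ∧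
      (∀ x : ℕ → ℕ, IsMeagre {y : ℕ → Bool | (x, y) ∈ U}) ∧
      ∀ A : Set (ℕ → Bool), IsMeagre A → ∃ x : ℕ → ℕ, A ⊆ {y : ℕ → Bool | (x, y) ∈ U} :=
  exists_isFsigma_universal_isMeagre (ℕ → Bool)
end

section
/- If σ-ideals I on Y and J on Z are Borel-on-Borel (for every Borel B ⊆ X × Y, {x : B_x ∈ I} is Borel, and similarly for J), then the Fubini product I ⊗ J is Borel-on-Borel: for every Borel B ⊆ X × Y × Z, the set {x ∈ X : B_x ∈ I ⊗ J} is Borel. -/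
/-- The Fubini product `I ⊗ J` of ideals: `A ∈ I ⊗ J` iff `A` is covered by a
Borel set `B ⊆ Y × Z` such that `{y | B_y ∉ J} ∈ I`. -/
def FubiniProd {Y Z : Type*} [MeasurableSpace Y] [MeasurableSpace Z]
    (I : Set (Set Y)) (J : Set (Set Z)) : Set (Set (Y × Z)) :=
  {A | ∃ B : Set (Y × Z), MeasurableSet B ∧ A ⊆ B ∧
    {y : Y | {z : Z | (y, z) ∈ B} ∉ J} ∈ I}

/-- If `I` and `J` are Borel-on-Borel σ-ideals on Polish spaces `Y` and `Z`,
then their Fubini product `I ⊗ J` is Borel-on-Borel: for every Polish `X` and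
Borel `B ⊆ X × (Y × Z)`, the set `{x | B_x ∈ I ⊗ J}` is Borel. -/
theorem fubiniProd_borel_on_borel
    (Y : Type) [TopologicalSpace Y] [PolishSpace Y] [MeasurableSpace Y] [BorelSpace Y]
    (Z : Type) [TopologicalSpace Z] [PolishSpace Z] [MeasurableSpace Z] [BorelSpace Z]
    (I : Set (Set Y)) (J : Set (Set Z))
    (hIempty : ∅ ∈ I) (hImono : ∀ A B : Set Y, A ⊆ B → B ∈ I → A ∈ I)
    (hIsigma : ∀ f : ℕ → Set Y, (∀ n, f n ∈ I) → (⋃ n, f n) ∈ I)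
    (hJempty : ∅ ∈ J) (hJmono : ∀ A B : Set Z, A ⊆ B → B ∈ J → A ∈ J)
    (hJsigma : ∀ f : ℕ → Set Z, (∀ n, f n ∈ J) → (⋃ n, f n) ∈ J)
    (hI : ∀ (X : Type) [TopologicalSpace X] [PolishSpace X] [MeasurableSpace X] [BorelSpace X],
      ∀ B : Set (X × Y), MeasurableSet B → MeasurableSet {x : X | {y : Y | (x, y) ∈ B} ∈ I})
    (hJ : ∀ (X : Type) [TopologicalSpace X] [PolishSpace X] [MeasurableSpace X] [BorelSpace X],
      ∀ B : Set (X × Z), MeasurableSet B → MeasurableSet {x : X | {z : Z | (x, z) ∈ B} ∈ J})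
    (X : Type) [TopologicalSpace X] [PolishSpace X] [MeasurableSpace X] [BorelSpace X]
    (B : Set (X × (Y × Z))) (hB : MeasurableSet B) :
    MeasurableSet {x : X | {p : Y × Z | (x, p) ∈ B} ∈ FubiniProd I J} := by
  classical
  -- reassociated set
  set B' : Set ((X × Y) × Z) := (fun p : (X × Y) × Z => (p.1.1, (p.1.2, p.2))) ⁻¹' B with hB'def
  have hmeas : Measurable (fun p : (X × Y) × Z => (p.1.1, (p.1.2, p.2))) :=
    (measurable_fst.comp measurable_fst).prodMk
      ((measurable_snd.comp measurable_fst).prodMk measurable_snd)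
  have hB' : MeasurableSet B' := hmeas hB
  -- the set of (x,y) whose z-section is NOT in J
  have hC : MeasurableSet {q : X × Y | {z : Z | (q, z) ∈ B'} ∈ J} := hJ (X × Y) B' hB'
  have hD : MeasurableSet {q : X × Y | {z : Z | (q, z) ∈ B'} ∈ J}ᶜ := hC.compl
  have key : MeasurableSet
      {x : X | {y : Y | (x, y) ∈ ({q : X × Y | {z : Z | (q, z) ∈ B'} ∈ J}ᶜ)} ∈ I} :=
    hI X _ hD
  convert key using 1
  ext x
  simp only [Set.mem_setOf_eq, Set.mem_compl_iff]
  constructor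
  · rintro ⟨C, hCmeas, hsub, hCI⟩
    refine hImono _ _ ?_ hCI
    intro y hy
    simp only [Set.mem_setOf_eq] at hy ⊢
    exact fun hz => hy (hJmono _ _ (fun z hzz => hsub hzz) hz)
  · intro h
    refine ⟨{p : Y × Z | (x, p) ∈ B}, ?_, fun p hp => hp, h⟩
    exact measurable_prodMk_left hB
end
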